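/- arXiv:1706.02562 — 7 statements merged into one kernel-verified Lean document; each statement's English description precedes it below -/
import Mathlib

section
/- Let P and Q be probability measures on a measurable space 𝒟 with KL(P‖Q) ≤ τ for some τ ≥ 0. Let ℛ be a measurable space, ε > 0, δ ∈ [0,1], γ ∈ (0,1), and let M assign to each database D ∈ 𝒟^n a probability measure M(D) on ℛ. Let A ⊆ 𝒟^{n+1} be the set of all w such that the induced neighbouring pair D(w), D'(w) satisfies: for every measurable R ⊆ ℛ, M(D(w))(R) ≤ e^ε · M(D'(w))(R) + δ; assume A is measurable. If P^{⊗(n+1)}(A) ≥ 1 − γ, then Q^{⊗(n+1)}(A) ≥ 1 − γ − √((n+1)·τ/2). -/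
/-!
Pinsker's inequality bounds `P'(A) - Q'(A)` by `√(KL(P'‖Q')/2)` for every event `A`, and KL
divergence is additive over product measures, so that
`KL(P^{⊗(n+1)} ‖ Q^{⊗(n+1)}) = (n+1) KL(P‖Q) ≤ (n+1) τ`.

For Pinsker we use the elementary bound `3 (x - 1)² ≤ (2x + 4) (x log x + 1 - x)` with
`x = dP'/dQ'`: by AM–GM it gives `2 (P'(A) - Q'(A)) ≤ ∫ |x - 1| dQ' ≤ t + KL / (2t)` for all
`t > 0`, and `t = P'(A) - Q'(A)` yields the claim.
-/

open MeasureTheory Real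
open scoped ENNReal
open InformationTheory Set

lemma hasDerivAt_add_one_mul_log_sub {x : ℝ} (hx : 0 < x) :
    HasDerivAt (fun y => (y + 1) * log y - 2 * (y - 1)) (log x + x⁻¹ - 1) x := by
  refine (((hasDerivAt_id' x).add_const 1).mul (hasDerivAt_log hx.ne')).sub
    (((hasDerivAt_id' x).sub_const 1).const_mul 2) |>.congr_deriv ?_
  field_simp
  ring

lemma monotoneOn_add_one_mul_log_sub :
    MonotoneOn (fun x : ℝ => (x + 1) * log x - 2 * (x - 1)) (Ioi 0) := by
  refine monotoneOn_of_hasDerivWithinAt_nonneg (f' := fun x => log x + x⁻¹ - 1) (convex_Ioi 0)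
    (fun x hx => (hasDerivAt_add_one_mul_log_sub hx).continuousAt.continuousWithinAt)
    (fun x hx => ?_) (fun x hx => ?_)
  all_goals rw [interior_Ioi] at hx
  · exact (hasDerivAt_add_one_mul_log_sub hx).hasDerivWithinAt
  · linarith [one_sub_inv_le_log_of_pos hx]

lemma hasDerivAt_mul_klFun_sub_sq {x : ℝ} (hx : 0 < x) :
    HasDerivAt (fun y => (2 * y + 4) * klFun y - 3 * (y - 1) ^ 2)
      (4 * ((x + 1) * log x - 2 * (x - 1))) x := by
  refine ((((hasDerivAt_id' x).const_mul 2).add_const 4).mul (hasDerivAt_klFun hx.ne')).sub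
    ((((hasDerivAt_id' x).sub_const 1).pow 2).const_mul 3) |>.congr_deriv ?_
  simp only [klFun_apply]
  ring

lemma three_mul_sq_sub_one_le_mul_klFun {x : ℝ} (hx : 0 ≤ x) :
    3 * (x - 1) ^ 2 ≤ (2 * x + 4) * klFun x := by
  set h : ℝ → ℝ := fun y => (2 * y + 4) * klFun y - 3 * (y - 1) ^ 2
  have hcont : Continuous h := by unfold h; fun_prop (disch := exact continuous_klFun)
  set f' : ℝ → ℝ := fun y => 4 * ((y + 1) * log y - 2 * (y - 1))
  have hderiv {y : ℝ} (hy : 0 < y) : HasDerivAt h (f' y) y := hasDerivAt_mul_klFun_sub_sq hy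
  have hf'_one : f' 1 = 0 := by simp [f']
  have hmono {y z : ℝ} (hy : 0 < y) (hz : 0 < z) (hyz : y ≤ z) : f' y ≤ f' z := by
    have := monotoneOn_add_one_mul_log_sub hy hz hyz
    simp only [f']
    linarith
  -- `h' = f'` changes sign from `-` to `+` at `1`, so `h` is minimal there.
  suffices h 1 ≤ h x by simpa [h, klFun_one] using this
  rcases le_total x 1 with hx1 | hx1
  · refine antitoneOn_of_hasDerivWithinAt_nonpos (f' := f') (convex_Icc x 1) hcont.continuousOn
      (fun y hy => ?_) (fun y hy => ?_) ⟨le_rfl, hx1⟩ ⟨hx1, le_rfl⟩ hx1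
    all_goals rw [interior_Icc] at hy
    · exact (hderiv (hx.trans_lt hy.1)).hasDerivWithinAt
    · exact hf'_one ▸ hmono (hx.trans_lt hy.1) one_pos hy.2.le
  · refine monotoneOn_of_hasDerivWithinAt_nonneg (f' := f') (convex_Icc 1 x) hcont.continuousOn
      (fun y hy => ?_) (fun y hy => ?_) ⟨le_rfl, hx1⟩ ⟨hx1, le_rfl⟩ hx1
    all_goals rw [interior_Icc] at hy
    · exact (hderiv (one_pos.trans hy.1)).hasDerivWithinAt
    · exact hf'_one ▸ hmono one_pos (one_pos.trans hy.1) hy.1.le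

lemma abs_sub_one_le_mul_add_klFun_div {x t : ℝ} (hx : 0 ≤ x) (ht : 0 < t) :
    |x - 1| ≤ t * (x + 2) / 3 + klFun x / (2 * t) := by
  have hkey := three_mul_sq_sub_one_le_mul_klFun hx
  have ha : 0 ≤ t * (x + 2) / 3 := by positivity
  have hb : 0 ≤ klFun x / (2 * t) := div_nonneg (klFun_nonneg hx) (by positivity)
  refine abs_le_of_sq_le_sq ?_ (add_nonneg ha hb)
  have h4ab : 4 * (t * (x + 2) / 3) * (klFun x / (2 * t)) = (2 * x + 4) * klFun x / 3 := by
    field_simp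
    ring
  nlinarith [sq_nonneg (t * (x + 2) / 3 - klFun x / (2 * t))]

section Pinsker

variable {α : Type*} [MeasurableSpace α] {μ ν : Measure α}
  [IsProbabilityMeasure μ] [IsProbabilityMeasure ν]

lemma integral_abs_toReal_rnDeriv_sub_one_le (hμν : μ ≪ ν) (h_int : Integrable (llr μ ν) μ)
    {t : ℝ} (ht : 0 < t) :
    ∫ x, |(μ.rnDeriv ν x).toReal - 1| ∂ν ≤ t + (∫ x, llr μ ν x ∂μ) / (2 * t) := by
  set g : α → ℝ := fun x => (μ.rnDeriv ν x).toReal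
  have hg : Integrable g ν := Measure.integrable_toReal_rnDeriv
  have hg2 : Integrable (fun x => g x + 2) ν := hg.add (integrable_const 2)
  have hklFun : Integrable (fun x => klFun (g x)) ν := (integrable_klFun_rnDeriv_iff hμν).2 h_int
  calc ∫ x, |g x - 1| ∂ν
      ≤ ∫ x, (t * (g x + 2) / 3 + klFun (g x) / (2 * t)) ∂ν :=
        integral_mono (hg.sub (integrable_const 1)).abs
          (((hg2.const_mul t).div_const 3).add (hklFun.div_const _))
          fun x => abs_sub_one_le_mul_add_klFun_div ENNReal.toReal_nonneg ht
    _ = t + (∫ x, llr μ ν x ∂μ) / (2 * t) := by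
        rw [integral_add ((hg2.const_mul t).div_const 3) (hklFun.div_const _), integral_div,
          integral_const_mul, integral_add hg (integrable_const 2), integral_div,
          integral_klFun_rnDeriv hμν h_int, Measure.integral_toReal_rnDeriv hμν]
        simp only [probReal_univ, integral_const, smul_eq_mul, one_mul, add_sub_cancel_right]
        ring

lemma two_mul_measureReal_sub_le_integral_abs (hμν : μ ≪ ν) {s : Set α}
    (hs : MeasurableSet s) :
    2 * (μ.real s - ν.real s) ≤ ∫ x, |(μ.rnDeriv ν x).toReal - 1| ∂ν := by
  set g : α → ℝ := fun x => (μ.rnDeriv ν x).toReal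
  have hg : Integrable (fun x => g x - 1) ν :=
    Measure.integrable_toReal_rnDeriv.sub (integrable_const 1)
  have hset (s : Set α) : ∫ x in s, (g x - 1) ∂ν = μ.real s - ν.real s := by
    rw [integral_sub Measure.integrable_toReal_rnDeriv.integrableOn (integrable_const 1),
      Measure.setIntegral_toReal_rnDeriv hμν, setIntegral_const, smul_eq_mul, mul_one]
  have hcompl : μ.real sᶜ - ν.real sᶜ = -(μ.real s - ν.real s) := by
    rw [probReal_compl_eq_one_sub hs, probReal_compl_eq_one_sub hs]
    ring
  calc 2 * (μ.real s - ν.real s)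
      = ∫ x in s, (g x - 1) ∂ν + ∫ x in sᶜ, -(g x - 1) ∂ν := by
        rw [integral_neg, hset, hset, hcompl]
        ring
    _ ≤ ∫ x in s, |g x - 1| ∂ν + ∫ x in sᶜ, |g x - 1| ∂ν :=
        add_le_add (integral_mono hg.integrableOn hg.abs.integrableOn fun x => le_abs_self _)
          (integral_mono hg.neg.integrableOn hg.abs.integrableOn fun x => neg_le_abs _)
    _ = ∫ x, |g x - 1| ∂ν := integral_add_compl hs hg.abs

theorem measureReal_sub_le_sqrt_integral_llr (hμν : μ ≪ ν) (h_int : Integrable (llr μ ν) μ)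
    {s : Set α} (hs : MeasurableSet s) :
    μ.real s - ν.real s ≤ √((∫ x, llr μ ν x ∂μ) / 2) := by
  set d := μ.real s - ν.real s
  rcases le_or_gt d 0 with hd | hd
  · exact hd.trans (sqrt_nonneg _)
  have hbound := (two_mul_measureReal_sub_le_integral_abs hμν hs).trans
    (integral_abs_toReal_rnDeriv_sub_one_le hμν h_int hd)
  rw [le_sqrt' hd, le_div_iff₀ two_pos]
  rw [← sub_le_iff_le_add', le_div_iff₀ (by positivity)] at hbound
  nlinarith

end Pinsker

section Pi

open ProbabilityTheory

variable {ι : Type*} [Fintype ι] {α : ι → Type*} [∀ i, MeasurableSpace (α i)]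
  {μ ν : (i : ι) → Measure (α i)} [∀ i, IsProbabilityMeasure (μ i)]
  [∀ i, IsProbabilityMeasure (ν i)]

lemma lintegral_pi_prod (f : ∀ i, α i → ℝ≥0∞) (hf : ∀ i, Measurable (f i)) :
    ∫⁻ x, ∏ i, f i (x i) ∂Measure.pi ν = ∏ i, ∫⁻ y, f i y ∂ν i := by
  refine (lintegral_prod_eq_prod_lintegral_of_indepFun _ (fun i (x : ∀ j, α j) => f i (x i))
    (iIndepFun_pi fun i => (hf i).aemeasurable)
    fun i => (hf i).comp (measurable_pi_apply i)).trans ?_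
  exact Finset.prod_congr rfl fun i _ => (measurePreserving_eval ν i).lintegral_comp (hf i)

lemma pi_eq_withDensity_prod_rnDeriv (hμν : ∀ i, μ i ≪ ν i) :
    Measure.pi μ = (Measure.pi ν).withDensity fun x => ∏ i, (μ i).rnDeriv (ν i) (x i) := by
  refine Measure.pi_eq fun s hs => ?_
  have hbox : (Set.univ.pi s).indicator (fun x => ∏ i, (μ i).rnDeriv (ν i) (x i))
      = fun x => ∏ i, (s i).indicator ((μ i).rnDeriv (ν i)) (x i) := by
    ext x
    by_cases hx : x ∈ Set.univ.pi s
    · simp [hx, Set.indicator_of_mem (hx _ (Set.mem_univ _))]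
    · rw [Set.indicator_of_notMem hx]
      obtain ⟨i, hi⟩ := not_forall.1 (Set.mem_univ_pi.not.1 hx)
      exact (Finset.prod_eq_zero (Finset.mem_univ i) (Set.indicator_of_notMem hi _)).symm
  rw [withDensity_apply _ (MeasurableSet.univ_pi hs),
    ← lintegral_indicator (MeasurableSet.univ_pi hs), hbox,
    lintegral_pi_prod _ fun i => (Measure.measurable_rnDeriv _ _).indicator (hs i)]
  refine Finset.prod_congr rfl fun i _ => ?_
  rw [lintegral_indicator (hs i), ← withDensity_apply _ (hs i),
    Measure.withDensity_rnDeriv_eq _ _ (hμν i)]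

lemma absolutelyContinuous_pi (hμν : ∀ i, μ i ≪ ν i) : Measure.pi μ ≪ Measure.pi ν :=
  pi_eq_withDensity_prod_rnDeriv hμν ▸ withDensity_absolutelyContinuous _ _

lemma llr_pi_ae_eq (hμν : ∀ i, μ i ≪ ν i) :
    llr (Measure.pi μ) (Measure.pi ν)
      =ᵐ[Measure.pi μ] fun x => ∑ i, llr (μ i) (ν i) (x i) := by
  have hdens : Measurable fun x : ∀ i, α i => ∏ i, (μ i).rnDeriv (ν i) (x i) :=
    Finset.measurable_prod _ fun i _ =>
      (Measure.measurable_rnDeriv _ _).comp (measurable_pi_apply i)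
  have hrn : (Measure.pi μ).rnDeriv (Measure.pi ν) =ᵐ[Measure.pi μ]
      fun x => ∏ i, (μ i).rnDeriv (ν i) (x i) := by
    refine (absolutelyContinuous_pi hμν).ae_le ?_
    rw [pi_eq_withDensity_prod_rnDeriv hμν]
    exact Measure.rnDeriv_withDensity _ hdens
  have hfactor : ∀ᵐ x ∂Measure.pi μ, ∀ i, (μ i).rnDeriv (ν i) (x i) ≠ 0 ∧
      (μ i).rnDeriv (ν i) (x i) ≠ ∞ := by
    refine ae_all_iff.2 fun i => (measurePreserving_eval μ i).quasiMeasurePreserving.ae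
      (p := fun y => (μ i).rnDeriv (ν i) y ≠ 0 ∧ (μ i).rnDeriv (ν i) y ≠ ∞) ?_
    filter_upwards [Measure.rnDeriv_pos (hμν i),
      (hμν i).ae_le (Measure.rnDeriv_lt_top (μ i) (ν i))] with y hpos hfin
      using ⟨hpos.ne', hfin.ne⟩
  filter_upwards [hrn, hfactor] with x hx hne
  simp only [llr_def, hx, ENNReal.toReal_prod]
  exact Real.log_prod fun i _ => ENNReal.toReal_ne_zero.2 (hne i)

lemma integrable_llr_pi (hμν : ∀ i, μ i ≪ ν i)
    (h_int : ∀ i, Integrable (llr (μ i) (ν i)) (μ i)) :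
    Integrable (llr (Measure.pi μ) (Measure.pi ν)) (Measure.pi μ) :=
  (integrable_finsetSum _ fun i _ => integrable_comp_eval (h_int i)).congr (llr_pi_ae_eq hμν).symm

lemma integral_llr_pi (hμν : ∀ i, μ i ≪ ν i)
    (h_int : ∀ i, Integrable (llr (μ i) (ν i)) (μ i)) :
    ∫ x, llr (Measure.pi μ) (Measure.pi ν) x ∂Measure.pi μ
      = ∑ i, ∫ x, llr (μ i) (ν i) x ∂μ i := by
  rw [integral_congr_ae (llr_pi_ae_eq hμν),
    integral_finsetSum _ fun i _ => integrable_comp_eval (h_int i)]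
  exact Finset.sum_congr rfl fun i _ => integral_comp_eval (h_int i).aestronglyMeasurable

end Pi

theorem rdp_transfer_of_klDiv_le_general
    {𝒟 : Type*} [MeasurableSpace 𝒟] (P Q : Measure 𝒟)
    [IsProbabilityMeasure P] [IsProbabilityMeasure Q]
    (τ : ℝ)
    (hac : P ≪ Q) (hint : Integrable (llr P Q) P)
    (hkl : ∫ x, llr P Q x ∂P ≤ τ)
    (n : ℕ) (γ : ℝ)
    (A : Set (Fin (n + 1) → 𝒟))
    (hA : MeasurableSet A)
    (hP : 1 - γ ≤ ((Measure.pi fun _ : Fin (n + 1) => P) A).toReal) :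
    1 - γ - Real.sqrt ((n + 1) * τ / 2) ≤
      ((Measure.pi fun _ : Fin (n + 1) => Q) A).toReal := by
  have hpinsker := measureReal_sub_le_sqrt_integral_llr
    (absolutelyContinuous_pi fun _ => hac) (integrable_llr_pi (fun _ => hac) fun _ => hint) hA
  have hkl_pi : ∫ w, llr (Measure.pi fun _ : Fin (n + 1) => P) (Measure.pi fun _ => Q) w
      ∂Measure.pi (fun _ => P) ≤ (n + 1) * τ := by
    rw [integral_llr_pi (fun _ => hac) fun _ => hint, Finset.sum_const, Finset.card_univ,
      Fintype.card_fin, nsmul_eq_mul]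
    push_cast
    exact mul_le_mul_of_nonneg_left hkl (by positivity)
  have := sqrt_le_sqrt (div_le_div_of_nonneg_right hkl_pi zero_le_two)
  simp only [measureReal_def] at hpinsker
  linarith

/-- Transfer of random differential privacy between nearby distributions:
if `KL(P‖Q) ≤ τ` and the set `A` of samples `w ~ P^{⊗(n+1)}` on which the induced
neighbouring pair `D(w), D'(w)` satisfies the `(ε,δ)`-DP inequality has `P^{⊗(n+1)}`-measure
at least `1 − γ`, then it has `Q^{⊗(n+1)}`-measure at least `1 − γ − √((n+1)τ/2)`. -/
theorem rdp_transfer_of_klDiv_le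
    {𝒟 : Type*} [MeasurableSpace 𝒟] (P Q : Measure 𝒟)
    [IsProbabilityMeasure P] [IsProbabilityMeasure Q]
    (τ : ℝ) (hτ : 0 ≤ τ)
    (hac : P ≪ Q) (hint : Integrable (llr P Q) P)
    (hkl : ∫ x, llr P Q x ∂P ≤ τ)
    {ℛ : Type*} [MeasurableSpace ℛ]
    (n : ℕ) (ε δ γ : ℝ) (hε : 0 < ε) (hδ0 : 0 ≤ δ) (hδ1 : δ ≤ 1)
    (hγ0 : 0 < γ) (hγ1 : γ < 1)
    (M : (Fin n → 𝒟) → Measure ℛ)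
    (A : Set (Fin (n + 1) → 𝒟))
    (hAdef : A = {w : Fin (n + 1) → 𝒟 |
      ∀ R : Set ℛ, MeasurableSet R →
        M (fun i : Fin n => w i.castSucc) R ≤
          ENNReal.ofReal (Real.exp ε) *
            M (fun i : Fin n =>
                if (i : ℕ) = n - 1 then w (Fin.last n) else w i.castSucc) R +
          ENNReal.ofReal δ})
    (hA : MeasurableSet A)
    (hP : 1 - γ ≤ ((Measure.pi fun _ : Fin (n + 1) => P) A).toReal) :
    1 - γ - Real.sqrt ((n + 1) * τ / 2) ≤
      ((Measure.pi fun _ : Fin (n + 1) => Q) A).toReal :=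
  rdp_transfer_of_klDiv_le_general P Q τ hac hint hkl n γ A hA hP
end

section
/- Let 𝒟 be a measurable space, P a probability measure on 𝒟, B a normed vector space equipped with a measurable-space structure making the norm of differences of f-values measurable, and f : 𝒟^n → B. Let ℛ be a measurable space, ε > 0, δ ∈ [0,1], γ ∈ (0,1), ρ ∈ (0, min{γ, 1/2}). Let m ∈ ℕ satisfy m ≥ log(1/ρ)/(2(γ−ρ)²) and let k ∈ ℕ satisfy k ≤ m and k ≥ m·(1 − γ + ρ + √(log(1/ρ)/(2m))). Let M : [0,∞) → B → (probability measures on ℛ) be sensitivity-induced (ε,δ)-differentially private, i.e., for every Δ ≥ 0 and every x, x' ∈ B with ‖x − x'‖ ≤ Δ, and every measurable R ⊆ ℛ, M(Δ)(x)(R) ≤ e^ε · M(Δ)(x')(R) + δ. For w ∈ 𝒟^{n+1} set g(w) = ‖f(w_1,…,w_n) − f(w_1,…,w_{n−1},w_{n+1})‖, and for a sample s = (s¹,…,sᵐ) ∈ (𝒟^{n+1})^m let Δ̂(s) be the k-th smallest value among g(s¹),…,g(sᵐ). Then, with w ~ P^{⊗(n+1)} and s ~ (P^{⊗(n+1)})^{⊗m}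 independent, the probability of the (assumed measurable) event { (w,s) : for every measurable R ⊆ ℛ, M(Δ̂(s))(f(w_1,…,w_n))(R) ≤ e^ε · M(Δ̂(s))(f(w_1,…,w_{n−1},w_{n+1}))(R) + δ } is at least 1 − γ. -/
/-! Let `t` be a `(1 - γ + ρ)`-quantile of the sensitivity `g` under `P^{⊗(n+1)}`. The sampled
sensitivity `Δ̂(s)` can fall below `t` only if at least `k` of the `m` independent samples do,
and each of them does so with probability at most `1 - γ + ρ`; by Hoeffding's inequality and
the choice of `k` this has probability at most `ρ`. Whenever `g(w) ≤ t ≤ Δ̂(s)`, the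
sensitivity-induced guarantee of `M` applies to the pair `D(w), D'(w)`; the two events are
independent, so the guarantee holds with probability at least `(1 - γ + ρ)(1 - ρ) ≥ 1 - γ`. -/

open MeasureTheory Real
open scoped ENNReal

/-- The `k`-th smallest element (i.e. the `k`-th order statistic, `k ≥ 1`) of a list of reals. -/
noncomputable def kthSmallest (l : List ℝ) (k : ℕ) : ℝ :=
  ((Multiset.ofList l).sort (· ≤ ·)).getD (k - 1) 0

open ProbabilityTheory Finset Set

theorem le_kthSmallest_of_countP_lt {l : List ℝ} {k : ℕ} {t : ℝ} (hk : k ≤ l.length)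
    (hcount : l.countP (· < t) < k) : t ≤ kthSmallest l k := by
  set srt := (Multiset.ofList l).sort (· ≤ ·)
  have hperm : srt.Perm l := Quotient.exact (Multiset.sort_eq _ _)
  have hlen : k - 1 < srt.length := by rw [hperm.length_eq]; omega
  by_contra! hlt
  rw [kthSmallest, List.getD_eq_getElem _ _ hlen] at hlt
  have htake : ∀ x ∈ srt.take k, x < t := by
    intro x hx
    obtain ⟨j, hj, rfl⟩ := List.mem_take_iff_getElem.1 hx
    have hj' : j < srt.length := by omega
    exact lt_of_le_of_lt ((Multiset.pairwise_sort _ _).rel_get_of_le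
      (a := ⟨j, hj'⟩) (b := ⟨k - 1, hlen⟩) (Fin.mk_le_mk.2 (by omega))) hlt
  have : k ≤ srt.countP (· < t) :=
    calc k = (srt.take k).countP (· < t) := by
          rw [List.countP_eq_length.2 (by simpa using htake), List.length_take]; omega
      _ ≤ srt.countP (· < t) := (List.take_sublist k srt).countP_le
  rw [hperm.countP_eq] at this
  omega

theorem List.countP_ofFn_eq_card_filter {α : Type*} {m : ℕ} (v : Fin m → α) (p : α → Bool) :
    (List.ofFn v).countP p = #{i | p (v i)} := by
  rw [Finset.card_def, Finset.filter_val, Fin.univ_def, Multiset.filter_coe, Multiset.coe_card,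
    ← List.countP_eq_length_filter, List.ofFn_eq_map, List.countP_map]
  simp only [Function.comp_def, Bool.decide_eq_true]

theorem exists_measureReal_lt_le_and_le_measureReal_le {Ω : Type*} [MeasurableSpace Ω]
    (μ : Measure Ω) [IsProbabilityMeasure μ] {g : Ω → ℝ} (hg : Measurable g) {c : ℝ}
    (hc0 : 0 < c) (hc1 : c < 1) :
    ∃ t, μ.real {w | g w < t} ≤ c ∧ c ≤ μ.real {w | g w ≤ t} := by
  have := Measure.isProbabilityMeasure_map (μ := μ) hg.aemeasurable
  set ν := μ.map g
  suffices ∃ t, ν.real (Iio t) ≤ c ∧ c ≤ ν.real (Iic t) by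
    simp only [ν, map_measureReal_apply hg measurableSet_Iio,
      map_measureReal_apply hg measurableSet_Iic] at this
    exact this
  set S := {x | c ≤ cdf ν x}
  obtain ⟨x₁, hx₁⟩ := ((tendsto_cdf_atTop ν).eventually (lt_mem_nhds hc1)).exists
  obtain ⟨x₀, hx₀⟩ :=
    Filter.eventually_atBot.1 ((tendsto_cdf_atBot ν).eventually (gt_mem_nhds hc0))
  have hbdd : BddBelow S :=
    ⟨x₀, fun x hx => le_of_not_ge fun hle => (hx.trans_lt (hx₀ x hle)).false⟩
  refine ⟨sInf S, ?_, ?_⟩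
  · refine ENNReal.toReal_le_of_le_ofReal hc0.le ?_
    rw [← measure_cdf ν, (cdf ν).measure_Iio (tendsto_cdf_atBot ν), sub_zero]
    exact ENNReal.ofReal_le_ofReal <| le_of_tendsto ((monotone_cdf ν).tendsto_leftLim _)
      (eventually_nhdsWithin_of_forall fun x hx =>
        (lt_of_not_ge fun h => hx.not_ge (csInf_le hbdd h)).le)
  · rw [← cdf_eq_real]
    refine ge_of_tendsto (((cdf ν).right_continuous _).mono Ioi_subset_Ici_self).tendsto
      (eventually_nhdsWithin_of_forall fun x hx => ?_)
    obtain ⟨y, hyS, hyx⟩ := exists_lt_of_csInf_lt ⟨x₁, hx₁.le⟩ hx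
    exact hyS.trans (monotone_cdf ν hyx.le)

theorem measureReal_pi_card_filter_mem_ge_le_exp {Ω ι : Type*} [MeasurableSpace Ω]
    [Fintype ι] (μ : Measure Ω) [IsProbabilityMeasure μ] {T : Set Ω} [DecidablePred (· ∈ T)]
    (hT : MeasurableSet T) {x : ℝ} (hx : Fintype.card ι * μ.real T ≤ x) :
    (Measure.pi fun _ : ι => μ).real {s | x ≤ #{i | s i ∈ T}} ≤
      exp (-2 * (x - Fintype.card ι * μ.real T) ^ 2 / Fintype.card ι) := by
  set ν := Measure.pi fun _ : ι => μ
  have hind : Measurable (T.indicator (1 : Ω → ℝ)) := measurable_one.indicator hT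
  have hmean (i : ι) : ν[fun s => T.indicator 1 (s i)] = μ.real T := by
    rw [← integral_indicator_one hT, ← (measurePreserving_eval (fun _ : ι => μ) i).map_eq,
      integral_map (measurable_pi_apply i).aemeasurable hind.aestronglyMeasurable]
  have hsubG (i : ι) : HasSubgaussianMGF (fun s => T.indicator 1 (s i) - μ.real T)
      ((‖(1 : ℝ) - 0‖₊ / 2) ^ 2) ν := by
    rw [← hmean i]
    refine hasSubgaussianMGF_of_mem_Icc (hind.comp (measurable_pi_apply i)).aemeasurable
      (ae_of_all _ fun s => ?_)
    by_cases h : s i ∈ T <;> simp [h]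
  have hindep : iIndepFun (fun i s => T.indicator (1 : Ω → ℝ) (s i) - μ.real T) ν :=
    iIndepFun_pi (X := fun _ ω => T.indicator (1 : Ω → ℝ) ω - μ.real T) fun _ =>
      (hind.sub_const _).aemeasurable
  have hsum (s : ι → Ω) : ∑ i, (T.indicator (1 : Ω → ℝ) (s i) - μ.real T) =
      #{i | s i ∈ T} - Fintype.card ι * μ.real T := by
    simp [Finset.sum_sub_distrib, Set.indicator_apply, Finset.sum_boole]
  have := HasSubgaussianMGF.measure_sum_ge_le_of_iIndepFun hindep (s := univ)
    (fun i _ => hsubG i) (sub_nonneg.2 hx)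
  simp only [hsum, sub_le_sub_iff_right] at this
  convert this using 2
  simp only [sub_zero, nnnorm_one, one_div, inv_pow, sum_const, card_univ, nsmul_eq_mul,
    NNReal.coe_mul, NNReal.coe_natCast, NNReal.coe_inv, NNReal.coe_pow, NNReal.coe_ofNat]
  ring

theorem one_sub_le_measureReal_pi_card_filter_mem_lt {Ω : Type*} [MeasurableSpace Ω]
    (μ : Measure Ω) [IsProbabilityMeasure μ] {T : Set Ω} [DecidablePred (· ∈ T)]
    (hT : MeasurableSet T) {m k : ℕ} {c ρ : ℝ} (hρ0 : 0 < ρ) (hρ1 : ρ ≤ 1) (hm : 0 < m)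
    (hTc : μ.real T ≤ c) (hk : m * (c + √(log (1 / ρ) / (2 * m))) ≤ k) :
    1 - ρ ≤ (Measure.pi fun _ : Fin m => μ).real {s | #{i | s i ∈ T} < k} := by
  set L := log (1 / ρ)
  have hL : 0 ≤ L := log_nonneg (one_le_one_div hρ0 hρ1)
  have hm' : (0 : ℝ) < m := Nat.cast_pos.2 hm
  have hgap : m * √(L / (2 * m)) ≤ k - m * μ.real T := by nlinarith
  have hmk : m * μ.real T ≤ k := by nlinarith [sqrt_nonneg (L / (2 * m))]
  have hexp : L ≤ 2 * (k - m * μ.real T) ^ 2 / m := by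
    have hsq := pow_le_pow_left₀ (by positivity) hgap 2
    rw [mul_pow, sq_sqrt (by positivity)] at hsq
    rw [le_div_iff₀ hm']
    field_simp at hsq
    nlinarith
  have htail : (Measure.pi fun _ : Fin m => μ).real {s | (k : ℝ) ≤ #{i | s i ∈ T}} ≤ ρ :=
    calc _ ≤ exp (-2 * (k - m * μ.real T) ^ 2 / m) := by
          simpa only [Fintype.card_fin] using measureReal_pi_card_filter_mem_ge_le_exp μ hT
            (ι := Fin m) (by simpa only [Fintype.card_fin] using hmk)
      _ ≤ exp (-L) := by rw [exp_le_exp, neg_mul, neg_div]; linarith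
      _ = ρ := by simp only [L, one_div, log_inv, neg_neg, exp_log hρ0]
  have hcompl : {s : Fin m → Ω | #{i | s i ∈ T} < k} = {s | (k : ℝ) ≤ #{i | s i ∈ T}}ᶜ := by
    ext s
    simp [not_le]
  have := measureReal_union_le (μ := Measure.pi fun _ : Fin m => μ)
    {s | (k : ℝ) ≤ #{i | s i ∈ T}} {s | (k : ℝ) ≤ #{i | s i ∈ T}}ᶜ
  rw [union_compl_self, probReal_univ, ← hcompl] at this
  linarith

theorem sample_then_respond_rdp_general
    {𝒟 : Type*} [MeasurableSpace 𝒟] (P : Measure 𝒟) [IsProbabilityMeasure P]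
    {B : Type*} [NormedAddCommGroup B]
    {ℛ : Type*} [MeasurableSpace ℛ]
    (n : ℕ) (f : (Fin n → 𝒟) → B)
    (g : (Fin (n + 1) → 𝒟) → ℝ)
    (hgdef : g = fun w =>
      ‖f (fun i : Fin n => w i.castSucc) -
        f (fun i : Fin n =>
            if (i : ℕ) = n - 1 then w (Fin.last n) else w i.castSucc)‖)
    (hg : Measurable g)
    (ε δ γ ρ : ℝ)
    (hγ1 : γ < 1) (hρ0 : 0 < ρ) (hργ : ρ < γ)
    (m k : ℕ)
    (hm : Real.log (1/ρ) / (2 * (γ - ρ)^2) ≤ (m : ℝ))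
    (hkm : k ≤ m)
    (hk : (m : ℝ) * (1 - γ + ρ + Real.sqrt (Real.log (1/ρ) / (2 * m))) ≤ (k : ℝ))
    (M : ℝ → B → Measure ℛ)
    -- sensitivity-induced (ε,δ)-differential privacy of the mechanism `M`:
    (hMdp : ∀ Δ : ℝ, 0 ≤ Δ → ∀ x x' : B, ‖x - x'‖ ≤ Δ →
      ∀ R : Set ℛ, MeasurableSet R →
        M Δ x R ≤ ENNReal.ofReal (Real.exp ε) * M Δ x' R + ENNReal.ofReal δ)
    -- the sampled sensitivity: the k-th order statistic of the sampled sensitivities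
    (Δhat : (Fin m → Fin (n + 1) → 𝒟) → ℝ)
    (hΔhat : Δhat = fun s => kthSmallest (List.ofFn fun i : Fin m => g (s i)) k)
    -- the event that the (ε,δ)-DP inequality holds on the induced neighbouring pair,
    -- when the mechanism is run with the sampled sensitivity:
    (A : Set ((Fin (n + 1) → 𝒟) × (Fin m → Fin (n + 1) → 𝒟)))
    (hAdef : A = {ws |
      ∀ R : Set ℛ, MeasurableSet R →
        M (Δhat ws.2) (f (fun i : Fin n => ws.1 i.castSucc)) R ≤
          ENNReal.ofReal (Real.exp ε) *
            M (Δhat ws.2)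
              (f (fun i : Fin n =>
                if (i : ℕ) = n - 1 then ws.1 (Fin.last n) else ws.1 i.castSucc)) R +
          ENNReal.ofReal δ}) :
    1 - γ ≤
      (((Measure.pi fun _ : Fin (n + 1) => P).prod
          (Measure.pi fun _ : Fin m => Measure.pi fun _ : Fin (n + 1) => P)) A).toReal := by
  set μ := Measure.pi fun _ : Fin (n + 1) => P
  set ν := Measure.pi fun _ : Fin m => μ
  set c := 1 - γ + ρ
  have hm0 : 0 < m := by
    have hlog : 0 < log (1 / ρ) := log_pos (one_lt_one_div hρ0 (by linarith))
    exact_mod_cast (div_pos hlog (by nlinarith)).trans_le hm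
  obtain ⟨t, hlow, hhigh⟩ :=
    exists_measureReal_lt_le_and_le_measureReal_le μ hg (c := c) (by linarith) (by linarith)
  set Good := {s : Fin m → Fin (n + 1) → 𝒟 | #{i | s i ∈ {w | g w < t}} < k}
  have hGood : 1 - ρ ≤ ν.real Good :=
    one_sub_le_measureReal_pi_card_filter_mem_lt μ (T := {w | g w < t}) (hg measurableSet_Iio)
      hρ0 (by linarith) hm0 hlow hk
  have hsub : {w | g w ≤ t} ×ˢ Good ⊆ A := by
    rintro ⟨w, s⟩ ⟨hw, hs⟩
    have hΔ : t ≤ Δhat s := hΔhat ▸ le_kthSmallest_of_countP_lt (by simpa using hkm)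
      (by rw [List.countP_ofFn_eq_card_filter]; simpa [Good] using hs)
    have hgw : g w ≤ Δhat s := (show g w ≤ t from hw).trans hΔ
    rw [hgdef] at hgw
    rw [hAdef]
    exact fun R hR => hMdp _ ((norm_nonneg _).trans hgw) _ _ hgw R hR
  calc 1 - γ ≤ c * (1 - ρ) := by nlinarith
    _ ≤ μ.real {w | g w ≤ t} * ν.real Good :=
        mul_le_mul hhigh hGood (by linarith) measureReal_nonneg
    _ = (μ.prod ν).real ({w | g w ≤ t} ×ˢ Good) := (measureReal_prod_prod _ _).symm
    _ ≤ (μ.prod ν).real A := measureReal_mono hsub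

/-- **Main theorem.** `SensitivitySampler` composed with any sensitivity-induced
`(ε,δ)`-differentially private mechanism preserves `(ε,δ,γ)`-random differential privacy,
provided `m ≥ log(1/ρ)/(2(γ−ρ)²)` and `m ≥ k ≥ m(1 − γ + ρ + √(log(1/ρ)/(2m)))`. -/
theorem sample_then_respond_rdp
    {𝒟 : Type*} [MeasurableSpace 𝒟] (P : Measure 𝒟) [IsProbabilityMeasure P]
    {B : Type*} [NormedAddCommGroup B] [NormedSpace ℝ B]
    {ℛ : Type*} [MeasurableSpace ℛ]
    (n : ℕ) (f : (Fin n → 𝒟) → B)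
    (g : (Fin (n + 1) → 𝒟) → ℝ)
    (hgdef : g = fun w =>
      ‖f (fun i : Fin n => w i.castSucc) -
        f (fun i : Fin n =>
            if (i : ℕ) = n - 1 then w (Fin.last n) else w i.castSucc)‖)
    (hg : Measurable g)
    (ε δ γ ρ : ℝ) (hε : 0 < ε) (hδ0 : 0 ≤ δ) (hδ1 : δ ≤ 1)
    (hγ0 : 0 < γ) (hγ1 : γ < 1) (hρ0 : 0 < ρ) (hργ : ρ < γ) (hρhalf : ρ < 1/2)
    (m k : ℕ)
    (hm : Real.log (1/ρ) / (2 * (γ - ρ)^2) ≤ (m : ℝ))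
    (hkm : k ≤ m)
    (hk : (m : ℝ) * (1 - γ + ρ + Real.sqrt (Real.log (1/ρ) / (2 * m))) ≤ (k : ℝ))
    (M : ℝ → B → Measure ℛ)
    (hMprob : ∀ Δ : ℝ, 0 ≤ Δ → ∀ x : B, IsProbabilityMeasure (M Δ x))
    -- sensitivity-induced (ε,δ)-differential privacy of the mechanism `M`:
    (hMdp : ∀ Δ : ℝ, 0 ≤ Δ → ∀ x x' : B, ‖x - x'‖ ≤ Δ →
      ∀ R : Set ℛ, MeasurableSet R →
        M Δ x R ≤ ENNReal.ofReal (Real.exp ε) * M Δ x' R + ENNReal.ofReal δ)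
    -- the sampled sensitivity: the k-th order statistic of the sampled sensitivities
    (Δhat : (Fin m → Fin (n + 1) → 𝒟) → ℝ)
    (hΔhat : Δhat = fun s => kthSmallest (List.ofFn fun i : Fin m => g (s i)) k)
    -- the event that the (ε,δ)-DP inequality holds on the induced neighbouring pair,
    -- when the mechanism is run with the sampled sensitivity:
    (A : Set ((Fin (n + 1) → 𝒟) × (Fin m → Fin (n + 1) → 𝒟)))
    (hAdef : A = {ws |
      ∀ R : Set ℛ, MeasurableSet R →
        M (Δhat ws.2) (f (fun i : Fin n => ws.1 i.castSucc)) R ≤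
          ENNReal.ofReal (Real.exp ε) *
            M (Δhat ws.2)
              (f (fun i : Fin n =>
                if (i : ℕ) = n - 1 then ws.1 (Fin.last n) else ws.1 i.castSucc)) R +
          ENNReal.ofReal δ})
    (hA : MeasurableSet A) :
    1 - γ ≤
      (((Measure.pi fun _ : Fin (n + 1) => P).prod
          (Measure.pi fun _ : Fin m => Measure.pi fun _ : Fin (n + 1) => P)) A).toReal :=
  sample_then_respond_rdp_general P n f g hgdef hg ε δ γ ρ hγ1 hρ0 hργ m k hm hkm hk M hMdp Δhat
    hΔhat A hAdef
end

section
/- Let d ∈ ℕ with d ≥ 1, let Δ > 0, ε > 0, and let a, a' ∈ ℝ^d satisfy ‖a − a'‖₁ ≤ Δ, where ‖x‖₁ = Σ_{i=1}^d |x_i|. For c ∈ ℝ^d let μ_c be the measure on ℝ^d with density x ↦ (ε/(2Δ))^d · exp(−ε‖x − c‖₁/Δ) with respect to d-dimensional Lebesgue measure. Then μ_a and μ_{a'} are probability measures and for every Lebesgue-measurable set S ⊆ ℝ^d, μ_a(S) ≤ e^ε · μ_{a'}(S). -/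
open MeasureTheory Real
open scoped ENNReal BigOperators

/-- The `d`-dimensional Laplace mechanism: the measure on `ℝ^d` with density
`x ↦ (ε/(2Δ))^d · exp(−ε‖x−c‖₁/Δ)` with respect to `d`-dimensional Lebesgue measure. -/
noncomputable def laplaceMechanism (d : ℕ) (ε Δ : ℝ) (c : Fin d → ℝ) :
    Measure (Fin d → ℝ) :=
  volume.withDensity fun x =>
    ENNReal.ofReal ((ε / (2 * Δ))^d * Real.exp (-(ε * (∑ i, |x i - c i|) / Δ)))

/-! The density of `μ_c` factors into `d` one-dimensional Laplace densities of rate `ε / Δ`, each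
of total mass one. By the triangle inequality for `‖·‖₁`, the density of `μ_a` is at most
`exp (ε ‖a - a'‖₁ / Δ) ≤ e^ε` times that of `μ_{a'}` at every point. -/

open Set

lemma integrable_exp_neg_mul_abs {b : ℝ} (hb : 0 < b) :
    Integrable fun t : ℝ => exp (-(b * |t|)) := by
  have hneg : IntegrableOn (fun t : ℝ => exp (-(b * |t|))) (Iic 0) :=
    (integrableOn_exp_mul_Iic hb 0).congr_fun
      (fun t (ht : t ≤ 0) => by rw [abs_of_nonpos ht, mul_neg, neg_neg]) measurableSet_Iic
  have hpos : IntegrableOn (fun t : ℝ => exp (-(b * |t|))) (Ioi 0) :=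
    (integrableOn_exp_mul_Ioi (neg_neg_of_pos hb) 0).congr_fun
      (fun t (ht : 0 < t) => by simp only [abs_of_pos ht, neg_mul]) measurableSet_Ioi
  simpa only [Iic_union_Ioi, integrableOn_univ] using hneg.union hpos

lemma integral_exp_neg_mul_abs {b : ℝ} (hb : 0 < b) :
    ∫ t : ℝ, exp (-(b * |t|)) = 2 / b := by
  rw [integral_comp_abs (f := fun t => exp (-(b * t)))]
  simp_rw [← neg_mul]
  rw [integral_exp_mul_Ioi (neg_neg_of_pos hb), mul_zero, exp_zero]
  field_simp

lemma integral_laplace_density {b : ℝ} (hb : 0 < b) (c : ℝ) :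
    ∫ t : ℝ, b / 2 * exp (-(b * |t - c|)) = 1 := by
  rw [integral_const_mul, integral_sub_right_eq_self (fun t => exp (-(b * |t|))) c,
    integral_exp_neg_mul_abs hb]
  field_simp

lemma laplaceMechanism_density_eq_prod (d : ℕ) (ε Δ : ℝ) (c x : Fin d → ℝ) :
    (ε / (2 * Δ)) ^ d * exp (-(ε * (∑ i, |x i - c i|) / Δ)) =
      ∏ i, ε / Δ / 2 * exp (-(ε / Δ * |x i - c i|)) := by
  rw [Finset.prod_mul_distrib, Finset.prod_const, Finset.card_univ, Fintype.card_fin,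
    ← exp_sum, Finset.sum_neg_distrib, ← Finset.mul_sum]
  congr 2 <;> ring

theorem isProbabilityMeasure_laplaceMechanism (d : ℕ) {ε Δ : ℝ} (hε : 0 < ε) (hΔ : 0 < Δ)
    (c : Fin d → ℝ) : IsProbabilityMeasure (laplaceMechanism d ε Δ c) := by
  have hb : 0 < ε / Δ := div_pos hε hΔ
  have hint :
      Integrable fun x : Fin d → ℝ => ∏ i, ε / Δ / 2 * exp (-(ε / Δ * |x i - c i|)) :=
    Integrable.fin_nat_prod fun i =>
      ((integrable_exp_neg_mul_abs hb).comp_sub_right (c i)).const_mul _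
  have hnonneg :
      0 ≤ᵐ[volume] fun x : Fin d → ℝ => ∏ i, ε / Δ / 2 * exp (-(ε / Δ * |x i - c i|)) :=
    ae_of_all _ fun x => Finset.prod_nonneg fun _ _ => by positivity
  constructor
  rw [laplaceMechanism, withDensity_apply _ MeasurableSet.univ, Measure.restrict_univ]
  simp_rw [laplaceMechanism_density_eq_prod]
  rw [← ofReal_integral_eq_lintegral_ofReal hint hnonneg, volume_pi,
    integral_fintype_prod_eq_prod (fun i t => ε / Δ / 2 * exp (-(ε / Δ * |t - c i|)))]
  simp [integral_laplace_density hb]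

lemma sum_abs_sub_le_add {ι : Type*} (s : Finset ι) (x a a' : ι → ℝ) :
    ∑ i ∈ s, |x i - a' i| ≤ ∑ i ∈ s, |x i - a i| + ∑ i ∈ s, |a i - a' i| :=
  (Finset.sum_le_sum fun _ _ => abs_sub_le _ _ _).trans_eq Finset.sum_add_distrib

lemma laplaceMechanism_density_le_exp_mul (d : ℕ) {ε Δ : ℝ} (hε : 0 ≤ ε) (hΔ : 0 < Δ)
    {a a' : Fin d → ℝ} (ha : ∑ i, |a i - a' i| ≤ Δ) (x : Fin d → ℝ) :
    (ε / (2 * Δ)) ^ d * exp (-(ε * (∑ i, |x i - a i|) / Δ)) ≤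
      exp ε * ((ε / (2 * Δ)) ^ d * exp (-(ε * (∑ i, |x i - a' i|) / Δ))) := by
  rw [mul_left_comm, ← exp_add]
  gcongr
  have hsum : ε * (∑ i, |x i - a' i|) / Δ ≤ ε * (∑ i, |x i - a i|) / Δ + ε := calc
    _ ≤ ε * (∑ i, |x i - a i| + Δ) / Δ := by
      gcongr
      linarith [sum_abs_sub_le_add Finset.univ x a a']
    _ = _ := by field_simp
  linarith

theorem laplaceMechanism_dp_general
    (d : ℕ) (Δ ε : ℝ) (hΔ : 0 < Δ) (hε : 0 < ε)
    (a a' : Fin d → ℝ) (ha : (∑ i, |a i - a' i|) ≤ Δ) :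
    IsProbabilityMeasure (laplaceMechanism d ε Δ a) ∧
    IsProbabilityMeasure (laplaceMechanism d ε Δ a') ∧
    ∀ S : Set (Fin d → ℝ), MeasurableSet S →
      laplaceMechanism d ε Δ a S ≤
        ENNReal.ofReal (Real.exp ε) * laplaceMechanism d ε Δ a' S := by
  refine ⟨isProbabilityMeasure_laplaceMechanism d hε hΔ a,
    isProbabilityMeasure_laplaceMechanism d hε hΔ a', fun S _ => ?_⟩
  have hle :
      laplaceMechanism d ε Δ a ≤ ENNReal.ofReal (exp ε) • laplaceMechanism d ε Δ a' := by
    rw [laplaceMechanism, laplaceMechanism, ← withDensity_smul' _ _ ENNReal.ofReal_ne_top]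
    refine withDensity_mono (ae_of_all _ fun x => ?_)
    rw [Pi.smul_apply, smul_eq_mul, ← ENNReal.ofReal_mul (exp_nonneg ε)]
    exact ENNReal.ofReal_le_ofReal (laplaceMechanism_density_le_exp_mul d hε.le hΔ ha x)
  exact hle S

/-- The Laplace mechanism is sensitivity-induced `ε`-differentially private:
if `‖a − a'‖₁ ≤ Δ` then the corresponding Laplace measures are probability measures and
`μ_a(S) ≤ e^ε · μ_{a'}(S)` for every measurable `S`. -/
theorem laplaceMechanism_dp
    (d : ℕ) (hd : 1 ≤ d) (Δ ε : ℝ) (hΔ : 0 < Δ) (hε : 0 < ε)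
    (a a' : Fin d → ℝ) (ha : (∑ i, |a i - a' i|) ≤ Δ) :
    IsProbabilityMeasure (laplaceMechanism d ε Δ a) ∧
    IsProbabilityMeasure (laplaceMechanism d ε Δ a') ∧
    ∀ S : Set (Fin d → ℝ), MeasurableSet S →
      laplaceMechanism d ε Δ a S ≤
        ENNReal.ofReal (Real.exp ε) * laplaceMechanism d ε Δ a' S :=
  laplaceMechanism_dp_general d Δ ε hΔ hε a a' ha
end

section
/- Let (ℛ, 𝒜, μ) be a σ-finite measure space, let Δ > 0, ε > 0, and let q, q' : ℛ → ℝ be measurable functions with sup_{r∈ℛ} |q(r) − q'(r)| ≤ Δ. Assume the normalizing constants Z = ∫_ℛ exp(ε·q(r)/(2Δ)) dμ(r) and Z' = ∫_ℛ exp(ε·q'(r)/(2Δ)) dμ(r) are finite and strictly positive. Define probability measures ν(S) = (1/Z)·∫_S exp(ε·q(r)/(2Δ)) dμ(r) and ν'(S) = (1/Z')·∫_S exp(ε·q'(r)/(2Δ)) dμ(r). Then for every S ∈ 𝒜, ν(S) ≤ e^ε · ν'(S). -/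
open MeasureTheory Real
open scoped ENNReal

/-- The exponential mechanism is sensitivity-induced `ε`-differentially
private: for measurable scores `q, q'` with `sup_r |q(r) − q'(r)| ≤ Δ`, and finite, strictly
positive normalizers `Z, Z'`, the normalized Gibbs measures satisfy `ν(S) ≤ e^ε · ν'(S)`. -/
theorem exponentialMechanism_dp
    {ℛ : Type*} [MeasurableSpace ℛ] (μ : Measure ℛ) [SigmaFinite μ]
    (Δ ε : ℝ) (hΔ : 0 < Δ) (hε : 0 < ε)
    (q q' : ℛ → ℝ) (hq : Measurable q) (hq' : Measurable q')
    (hsens : ∀ r, |q r - q' r| ≤ Δ)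
    (Z Z' : ℝ≥0∞)
    (hZdef : Z = ∫⁻ r, ENNReal.ofReal (Real.exp (ε * q r / (2 * Δ))) ∂μ)
    (hZ'def : Z' = ∫⁻ r, ENNReal.ofReal (Real.exp (ε * q' r / (2 * Δ))) ∂μ)
    (hZtop : Z ≠ ∞) (hZ'top : Z' ≠ ∞) (hZpos : 0 < Z) (hZ'pos : 0 < Z')
    (ν ν' : Measure ℛ)
    (hνdef : ∀ S : Set ℛ, MeasurableSet S →
      ν S = (∫⁻ r in S, ENNReal.ofReal (Real.exp (ε * q r / (2 * Δ))) ∂μ) / Z)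
    (hν'def : ∀ S : Set ℛ, MeasurableSet S →
      ν' S = (∫⁻ r in S, ENNReal.ofReal (Real.exp (ε * q' r / (2 * Δ))) ∂μ) / Z') :
    ∀ S : Set ℛ, MeasurableSet S → ν S ≤ ENNReal.ofReal (Real.exp ε) * ν' S := by
  intro S hS
  set A : ℝ≥0∞ := ENNReal.ofReal (Real.exp (ε / 2)) with hA
  have hA0 : A ≠ 0 := by
    simp [hA, ENNReal.ofReal_eq_zero, not_le, Real.exp_pos]
  have hAtop : A ≠ ∞ := ENNReal.ofReal_ne_top
  -- pointwise bound: f ≤ A * g, and g ≤ A * f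
  have hpt : ∀ r, ENNReal.ofReal (Real.exp (ε * q r / (2 * Δ)))
      ≤ A * ENNReal.ofReal (Real.exp (ε * q' r / (2 * Δ))) := by
    intro r
    rw [hA, ← ENNReal.ofReal_mul (Real.exp_pos _).le, ← Real.exp_add]
    apply ENNReal.ofReal_le_ofReal
    apply Real.exp_le_exp.2
    have h1 : q r - q' r ≤ Δ := (abs_le.mp (hsens r)).2
    have h2Δ : (0:ℝ) < 2 * Δ := by linarith
    have hd : ε * (q r - q' r) / (2 * Δ) ≤ ε / 2 := by
      rw [div_le_iff₀ h2Δ]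
      nlinarith [mul_le_mul_of_nonneg_left h1 hε.le]
    have heq : ε * q r / (2 * Δ) = ε * (q r - q' r) / (2 * Δ) + ε * q' r / (2 * Δ) := by ring
    linarith
  have hpt' : ∀ r, ENNReal.ofReal (Real.exp (ε * q' r / (2 * Δ)))
      ≤ A * ENNReal.ofReal (Real.exp (ε * q r / (2 * Δ))) := by
    intro r
    rw [hA, ← ENNReal.ofReal_mul (Real.exp_pos _).le, ← Real.exp_add]
    apply ENNReal.ofReal_le_ofReal
    apply Real.exp_le_exp.2
    have h1 : q' r - q r ≤ Δ := by
      have := (abs_le.mp (hsens r)).1; linarith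
    have h2Δ : (0:ℝ) < 2 * Δ := by linarith
    have hd : ε * (q' r - q r) / (2 * Δ) ≤ ε / 2 := by
      rw [div_le_iff₀ h2Δ]
      nlinarith [mul_le_mul_of_nonneg_left h1 hε.le]
    have heq : ε * q' r / (2 * Δ) = ε * (q' r - q r) / (2 * Δ) + ε * q r / (2 * Δ) := by ring
    linarith
  -- numerator bound
  set N : ℝ≥0∞ := ∫⁻ r in S, ENNReal.ofReal (Real.exp (ε * q r / (2 * Δ))) ∂μ
  set N' : ℝ≥0∞ := ∫⁻ r in S, ENNReal.ofReal (Real.exp (ε * q' r / (2 * Δ))) ∂μ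
  have hN : N ≤ A * N' := by
    calc N ≤ ∫⁻ r in S, A * ENNReal.ofReal (Real.exp (ε * q' r / (2 * Δ))) ∂μ :=
          lintegral_mono fun r => hpt r
      _ = A * N' := lintegral_const_mul' _ _ hAtop
  have hZ' : Z' ≤ A * Z := by
    rw [hZ'def, hZdef]
    calc (∫⁻ r, ENNReal.ofReal (Real.exp (ε * q' r / (2 * Δ))) ∂μ)
        ≤ ∫⁻ r, A * ENNReal.ofReal (Real.exp (ε * q r / (2 * Δ))) ∂μ :=
          lintegral_mono fun r => hpt' r
      _ = A * _ := lintegral_const_mul' _ _ hAtop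
  -- inverse bound: Z⁻¹ ≤ A * Z'⁻¹
  have hinv : Z⁻¹ ≤ A * Z'⁻¹ := by
    have h1 : (A * Z)⁻¹ ≤ Z'⁻¹ := ENNReal.inv_le_inv.2 hZ'
    rw [ENNReal.mul_inv (Or.inl hA0) (Or.inl hAtop)] at h1
    calc Z⁻¹ = A * (A⁻¹ * Z⁻¹) := by
          rw [← mul_assoc, ENNReal.mul_inv_cancel hA0 hAtop, one_mul]
      _ ≤ A * Z'⁻¹ := mul_le_mul_right h1 A
  rw [hνdef S hS, hν'def S hS, ENNReal.div_eq_inv_mul, ENNReal.div_eq_inv_mul]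
  calc Z⁻¹ * N ≤ (A * Z'⁻¹) * (A * N') := mul_le_mul' hinv hN
    _ = (A * A) * (Z'⁻¹ * N') := by ring
    _ = ENNReal.ofReal (Real.exp ε) * (Z'⁻¹ * N') := by
        rw [hA, ← ENNReal.ofReal_mul (Real.exp_pos _).le, ← Real.exp_add]
        norm_num
end

section
/- Fix γ ∈ (0,1) and define m(ρ) = log(1/ρ) / (2(γ − ρ)²) for ρ ∈ (0, min{γ, 1/2}). Then m is strictly convex on the open interval (0, min{γ, 1/2}). -/
/-! Strict convexity follows from `m'' > 0`, where
`m''(ρ) = ((γ - ρ)² - 4ρ(γ - ρ) + 6ρ² log(1/ρ)) / (2ρ²(γ - ρ)⁴)`.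
The numerator equals `(γ - 3ρ)² + ρ² (6 log(1/ρ) - 4)`, which is positive because `ρ ≤ 1/2`
gives `log(1/ρ) ≥ log 2 > 2/3`. -/

open Real Set

lemma strictConvexOn_of_hasDerivAt2_pos {D : Set ℝ} (hD : Convex ℝ D) (hDo : IsOpen D)
    {f f' f'' : ℝ → ℝ} (hf : ∀ x ∈ D, HasDerivAt f (f' x) x)
    (hf' : ∀ x ∈ D, HasDerivAt f' (f'' x) x) (hf'' : ∀ x ∈ D, 0 < f'' x) :
    StrictConvexOn ℝ D f := by
  have hf'_mono : StrictMonoOn f' D :=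
    strictMonoOn_of_hasDerivWithinAt_pos hD
      (fun x hx => (hf' x hx).continuousAt.continuousWithinAt)
      (fun x hx => (hf' x (interior_subset hx)).hasDerivWithinAt)
      (fun x hx => hf'' x (interior_subset hx))
  refine StrictMonoOn.strictConvexOn_of_deriv hD
    (fun x hx => (hf x hx).continuousAt.continuousWithinAt) ?_
  rw [hDo.interior_eq]
  exact hf'_mono.congr fun x hx => ((hf x hx).deriv).symm

lemma Real.hasDerivAt_log_one_div {x : ℝ} (hx : x ≠ 0) :
    HasDerivAt (fun x => log (1 / x)) (-x⁻¹) x := by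
  simp_rw [one_div, log_inv]
  exact (hasDerivAt_log hx).neg

lemma sq_sub_four_mul_add_six_mul_log_one_div_pos (u : ℝ) {ρ : ℝ} (hρ0 : 0 < ρ)
    (hρ : ρ ≤ 1 / 2) : 0 < u ^ 2 - 4 * ρ * u + 6 * ρ ^ 2 * log (1 / ρ) := by
  have hlog : log 2 ≤ log (1 / ρ) :=
    log_le_log two_pos (by rw [le_div_iff₀ hρ0]; linarith)
  nlinarith [sq_nonneg (u - 2 * ρ), log_two_gt_d9, mul_pos hρ0 hρ0]

noncomputable def sampleSizeBound (γ ρ : ℝ) : ℝ := log (1 / ρ) / (2 * (γ - ρ) ^ 2)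

section
variable {γ ρ : ℝ}

lemma hasDerivAt_sampleSizeBound (hρ : ρ ≠ 0) (hργ : ρ ≠ γ) :
    HasDerivAt (sampleSizeBound γ)
      ((2 * ρ * log (1 / ρ) - (γ - ρ)) / (2 * ρ * (γ - ρ) ^ 3)) ρ := by
  have hγρ : γ - ρ ≠ 0 := sub_ne_zero.mpr hργ.symm
  have hden : HasDerivAt (fun ρ => 2 * (γ - ρ) ^ 2) (-4 * (γ - ρ)) ρ := by
    refine (((hasDerivAt_id' ρ).const_sub γ).fun_pow 2 |>.const_mul 2).congr_deriv ?_
    push_cast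
    ring
  refine ((hasDerivAt_log_one_div hρ).div hden (by positivity)).congr_deriv ?_
  field_simp
  ring

lemma hasDerivAt_deriv_sampleSizeBound (hρ : ρ ≠ 0) (hργ : ρ ≠ γ) :
    HasDerivAt (fun ρ => (2 * ρ * log (1 / ρ) - (γ - ρ)) / (2 * ρ * (γ - ρ) ^ 3))
      (((γ - ρ) ^ 2 - 4 * ρ * (γ - ρ) + 6 * ρ ^ 2 * log (1 / ρ)) /
        (2 * ρ ^ 2 * (γ - ρ) ^ 4)) ρ := by
  have hγρ : γ - ρ ≠ 0 := sub_ne_zero.mpr hργ.symm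
  have hnum : HasDerivAt (fun ρ => 2 * ρ * log (1 / ρ) - (γ - ρ))
      (2 * log (1 / ρ) - 1) ρ := by
    refine ((((hasDerivAt_id' ρ).const_mul 2).mul (hasDerivAt_log_one_div hρ)).sub
      ((hasDerivAt_id' ρ).const_sub γ)).congr_deriv ?_
    field_simp
    ring
  have hden : HasDerivAt (fun ρ => 2 * ρ * (γ - ρ) ^ 3) (2 * (γ - ρ) ^ 2 * (γ - 4 * ρ)) ρ := by
    refine (((hasDerivAt_id' ρ).const_mul 2).mul
      (((hasDerivAt_id' ρ).const_sub γ).fun_pow 3)).congr_deriv ?_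
    push_cast
    ring
  refine (hnum.div hden (by positivity)).congr_deriv ?_
  field_simp
  ring

end

theorem strictConvexOn_sampleSizeBound_general
    (γ : ℝ) :
    StrictConvexOn ℝ (Set.Ioo 0 (min γ (1/2)))
      (fun ρ : ℝ => Real.log (1/ρ) / (2 * (γ - ρ)^2)) := by
  have hργ : ∀ ρ ∈ Ioo 0 (min γ (1 / 2)), ρ ≠ γ := fun ρ hρ =>
    (hρ.2.trans_le (min_le_left _ _)).ne
  refine strictConvexOn_of_hasDerivAt2_pos (f := sampleSizeBound γ) (convex_Ioo _ _) isOpen_Ioo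
    (fun ρ hρ => hasDerivAt_sampleSizeBound hρ.1.ne' (hργ ρ hρ))
    (fun ρ hρ => hasDerivAt_deriv_sampleSizeBound hρ.1.ne' (hργ ρ hρ)) fun ρ hρ => ?_
  have hγρ : γ - ρ ≠ 0 := sub_ne_zero.mpr (hργ ρ hρ).symm
  obtain ⟨hρ0, hρ_lt⟩ := hρ
  exact div_pos (sq_sub_four_mul_add_six_mul_log_one_div_pos (γ - ρ) hρ0
    (hρ_lt.le.trans (min_le_right _ _))) (by positivity)

/-- For fixed `γ ∈ (0,1)`, the function
`m(ρ) = log(1/ρ)/(2(γ − ρ)²)` is strictly convex on `(0, min{γ, 1/2})`. -/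
theorem strictConvexOn_sampleSizeBound
    (γ : ℝ) (hγ0 : 0 < γ) (hγ1 : γ < 1) :
    StrictConvexOn ℝ (Set.Ioo 0 (min γ (1/2)))
      (fun ρ : ℝ => Real.log (1/ρ) / (2 * (γ - ρ)^2)) :=
  strictConvexOn_sampleSizeBound_general γ
end

section
/- Fix γ ∈ (0,1). There exists a unique ρ* ∈ (0, min{γ, 1/2}) satisfying 2·ρ*·log(ρ*) − ρ* = −γ, and this ρ* is the unique global minimizer of the function m(ρ) = log(1/ρ)/(2(γ − ρ)²) over the interval (0, min{γ, 1/2}). -/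
/-!
The sample size `m ρ = log (1/ρ) / (2 (γ - ρ)²)` has derivative
`-(2ρ log ρ - ρ + γ) / (2ρ (γ - ρ)³)` on `(0, γ)`, so its sign is that of `-γ - (2ρ log ρ - ρ)`.
The map `ρ ↦ 2ρ log ρ - ρ` has derivative `2 log ρ + 1 < 0` below `e^{-1/2} ≥ 1/2`, so it decreases
strictly from `0` at `ρ = 0` to below `-γ` at `ρ = min γ (1/2)`. It therefore crosses `-γ` exactly once,
at `ρ*`, and `m` decreases strictly before `ρ*` and increases strictly after it.
-/

open Real Set

noncomputable def criticalFun (ρ : ℝ) : ℝ := 2 * ρ * log ρ - ρ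

noncomputable def sampleSize (γ ρ : ℝ) : ℝ := log (1 / ρ) / (2 * (γ - ρ) ^ 2)

-- Continuity at `0` (with `log 0 = 0`, matching `ρ log ρ → 0`) lets the intermediate value
-- theorem run on the closed interval `[0, min γ (1/2)]`.
theorem continuous_criticalFun : Continuous criticalFun := by
  have h : criticalFun = fun ρ ↦ 2 * (ρ * log ρ) - ρ := by
    funext ρ; simp only [criticalFun]; ring
  rw [h]
  fun_prop [continuous_mul_log]

theorem hasDerivAt_criticalFun {ρ : ℝ} (hρ : ρ ≠ 0) :
    HasDerivAt criticalFun (2 * log ρ + 1) ρ := by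
  have h := (((hasDerivAt_id ρ).const_mul 2).mul (hasDerivAt_log hρ)).sub (hasDerivAt_id ρ)
  refine h.congr_deriv ?_
  simp only [id]
  field_simp
  ring

theorem strictAntiOn_criticalFun : StrictAntiOn criticalFun (Icc 0 (exp (-1 / 2))) := by
  refine strictAntiOn_of_deriv_neg (convex_Icc _ _) continuous_criticalFun.continuousOn ?_
  intro ρ hρ
  rw [interior_Icc] at hρ
  rw [(hasDerivAt_criticalFun hρ.1.ne').deriv]
  have := (log_lt_iff_lt_exp hρ.1).2 hρ.2
  linarith

theorem criticalFun_min_lt {γ : ℝ} (hγ0 : 0 < γ) (hγ1 : γ < 1) :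
    criticalFun (min γ (1 / 2)) < -γ := by
  rcases le_total γ (1 / 2) with h | h
  · rw [min_eq_left h, criticalFun]
    nlinarith [log_neg hγ0 hγ1]
  · rw [min_eq_right h, criticalFun, one_div, log_inv]
    linarith [log_two_gt_d9]

theorem hasDerivAt_sampleSize {γ ρ : ℝ} (hρ : 0 < ρ) (hργ : ρ ≠ γ) :
    HasDerivAt (sampleSize γ) (-(criticalFun ρ + γ) / (2 * ρ * (γ - ρ) ^ 3)) ρ := by
  have hγρ : γ - ρ ≠ 0 := sub_ne_zero.2 hργ.symm
  have hm : sampleSize γ = fun x ↦ -log x / (2 * (γ - x) ^ 2) := by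
    funext x; rw [sampleSize, one_div, log_inv]
  rw [hm]
  have h := (hasDerivAt_log hρ.ne').neg.div
    ((((hasDerivAt_id ρ).const_sub γ).pow 2).const_mul 2) (by simp [hγρ])
  refine h.congr_deriv ?_
  simp only [criticalFun, id, Pi.pow_apply, Pi.neg_apply]
  field_simp
  ring

theorem lt_of_deriv_neg_of_deriv_pos {f f' : ℝ → ℝ} {a b c : ℝ} (hc : c ∈ Ioo a b)
    (hf : ∀ x ∈ Ioo a b, HasDerivAt f (f' x) x) (hneg : ∀ x ∈ Ioo a c, f' x < 0)
    (hpos : ∀ x ∈ Ioo c b, 0 < f' x) {x : ℝ} (hx : x ∈ Ioo a b) (hxc : x ≠ c) : f c < f x := by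
  have hcont : ContinuousOn f (Ioo a b) := fun y hy ↦ (hf y hy).continuousAt.continuousWithinAt
  rcases hxc.lt_or_gt with hlt | hgt
  · have hanti : StrictAntiOn f (Ioc a c) := by
      refine strictAntiOn_of_deriv_neg (convex_Ioc a c)
        (hcont.mono fun y hy ↦ ⟨hy.1, hy.2.trans_lt hc.2⟩) fun y hy ↦ ?_
      rw [interior_Ioc] at hy
      rw [(hf y ⟨hy.1, hy.2.trans hc.2⟩).deriv]
      exact hneg y hy
    exact hanti ⟨hx.1, hlt.le⟩ ⟨hc.1, le_rfl⟩ hlt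
  · have hmono : StrictMonoOn f (Ico c b) := by
      refine strictMonoOn_of_deriv_pos (convex_Ico c b)
        (hcont.mono fun y hy ↦ ⟨hc.1.trans_le hy.1, hy.2⟩) fun y hy ↦ ?_
      rw [interior_Ico] at hy
      rw [(hf y ⟨hc.1.trans hy.1, hy.2⟩).deriv]
      exact hpos y hy
    exact hmono ⟨le_rfl, hc.2⟩ ⟨hgt.le, hx.2⟩ hgt

/-- For fixed `γ ∈ (0,1)` there is a unique `ρ* ∈ (0, min{γ, 1/2})` with
`2ρ*·log(ρ*) − ρ* = −γ`, and this `ρ*` is the unique global minimizer of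
`m(ρ) = log(1/ρ)/(2(γ − ρ)²)` on `(0, min{γ, 1/2})`. -/
theorem min_sampleSize_optimal_rho
    (γ : ℝ) (hγ0 : 0 < γ) (hγ1 : γ < 1) :
    ∃ ρstar : ℝ, ρstar ∈ Set.Ioo 0 (min γ (1/2)) ∧
      2 * ρstar * Real.log ρstar - ρstar = -γ ∧
      (∀ ρ ∈ Set.Ioo 0 (min γ (1/2)),
        2 * ρ * Real.log ρ - ρ = -γ → ρ = ρstar) ∧
      (∀ ρ ∈ Set.Ioo 0 (min γ (1/2)), ρ ≠ ρstar →
        Real.log (1/ρstar) / (2 * (γ - ρstar)^2) <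
          Real.log (1/ρ) / (2 * (γ - ρ)^2)) := by
  set b := min γ (1 / 2)
  have hb0 : 0 < b := lt_min hγ0 one_half_pos
  have hbγ : b ≤ γ := min_le_left _ _
  have hsub : Ioo 0 b ⊆ Icc 0 (exp (-1 / 2)) := fun x hx ↦
    ⟨hx.1.le, by linarith [hx.2, min_le_right γ (1 / 2), add_one_le_exp (-1 / 2)]⟩
  have hanti := strictAntiOn_criticalFun.mono hsub
  obtain ⟨ρs, hρs, hcrit⟩ : -γ ∈ criticalFun '' Ioo 0 b :=
    intermediate_value_Ioo' hb0.le continuous_criticalFun.continuousOn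
      ⟨criticalFun_min_lt hγ0 hγ1, by simp [criticalFun, hγ0]⟩
  refine ⟨ρs, hρs, hcrit, fun ρ hρ h ↦ hanti.injOn hρ hρs (h.trans hcrit.symm), ?_⟩
  intro ρ hρ hne
  refine lt_of_deriv_neg_of_deriv_pos (f := sampleSize γ) hρs
    (fun x hx ↦ hasDerivAt_sampleSize hx.1 (hx.2.trans_le hbγ).ne) (fun x hx ↦ ?_)
    (fun x hx ↦ ?_) hρ hne
  · have hx' : x ∈ Ioo 0 b := ⟨hx.1, hx.2.trans hρs.2⟩
    have hγx : 0 < γ - x := sub_pos.2 (hx'.2.trans_le hbγ)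
    have := hanti hx' hρs hx.2
    exact div_neg_of_neg_of_pos (by linarith) (by have := hx.1; positivity)
  · have hx' : x ∈ Ioo 0 b := ⟨hρs.1.trans hx.1, hx.2⟩
    have hγx : 0 < γ - x := sub_pos.2 (hx'.2.trans_le hbγ)
    have := hanti hρs hx' hx.1
    exact div_pos (by linarith) (by have := hx'.1; positivity)
end

section
/- Let λ > 0, n ∈ ℕ with n ≥ 1, and let w = (w_1,…,w_{n+1}) be drawn from the (n+1)-fold product of the exponential distribution with rate λ. Let f(D) = (1/n)·Σ_{i=1}^n D_i denote the sample mean of a database D ∈ ℝ^n, and set D = (w_1,…,w_n), D' = (w_1,…,w_{n−1},w_{n+1}). Then for every Δ ≥ 0, ℙ(|f(D) − f(D')| ≤ Δ) = 1 − e^{−λnΔ}; in particular this probability is at least 1 − γ for γ ∈ (0,1) whenever Δ ≥ log(1/γ)/(λn). -/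
/-!
The two sample means differ only in their last summand, so `|f(D) - f(D')| ≤ Δ` is the event
`|X - Y| ≤ nΔ` for the independent coordinates `X = w_n`, `Y = w_{n+1}`, both `Exp(λ)`.
Its complement is `{X + nΔ < Y}` together with its mirror image. Integrating the tail
`ℙ(Y > x + c) = e^{-λ(x + c)}` against the density `λe^{-λx}` of `X` leaves `e^{-λc}` times the
density of `Exp(2λ)`, so each half has probability `e^{-λc}/2`.
-/

open MeasureTheory ProbabilityTheory Real
open scoped ENNReal BigOperators

theorem Finset.sum_sub_sum_ite_eq {ι M : Type*} [Fintype ι] [DecidableEq ι] [AddCommGroup M]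
    (f : ι → M) (j : ι) (x : M) :
    ∑ i, f i - ∑ i, (if i = j then x else f i) = f j - x := by
  rw [← Finset.sum_sub_distrib, Fintype.sum_eq_single j fun i hi => by simp [hi]]
  simp

theorem MeasureTheory.Measure.map_eval_prod_eval_pi {ι : Type*} [Fintype ι] {Ω : ι → Type*}
    [∀ i, MeasurableSpace (Ω i)] (μ : ∀ i, Measure (Ω i)) [∀ i, IsProbabilityMeasure (μ i)]
    {a b : ι} (hab : a ≠ b) :
    (Measure.pi μ).map (fun ω => (ω a, ω b)) = (μ a).prod (μ b) := by
  have hindep : (fun ω : ∀ i, Ω i => ω a) ⟂ᵢ[Measure.pi μ] (fun ω => ω b) :=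
    (iIndepFun_pi (μ := μ) (X := fun i => (id : Ω i → Ω i)) fun _ => aemeasurable_id).indepFun hab
  rw [hindep.map_prod_eq_prod_map_map (measurable_pi_apply a).aemeasurable
    (measurable_pi_apply b).aemeasurable,
    (measurePreserving_eval μ a).map_eq, (measurePreserving_eval μ b).map_eq]

namespace ProbabilityTheory

variable {r : ℝ}

theorem expMeasure_Ioi (hr : 0 < r) {t : ℝ} (ht : 0 ≤ t) :
    expMeasure r (Set.Ioi t) = ENNReal.ofReal (exp (-(r * t))) := by
  have := isProbabilityMeasure_expMeasure hr
  rw [← ofReal_measureReal, ← Set.compl_Iic, probReal_compl_eq_one_sub measurableSet_Iic,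
    ← cdf_eq_real, cdf_expMeasure_eq hr, if_pos ht, sub_sub_cancel]

theorem measurable_exponentialPDF : Measurable (exponentialPDF r) :=
  (measurable_exponentialPDFReal r).ennreal_ofReal

theorem exponentialPDF_mul_expMeasure_Ioi (hr : 0 < r) {c : ℝ} (hc : 0 ≤ c) (x : ℝ) :
    exponentialPDF r x * expMeasure r (Set.Ioi (x + c)) =
      ENNReal.ofReal (exp (-(r * c)) / 2) * exponentialPDF (2 * r) x := by
  rcases le_or_gt 0 x with hx | hx
  · rw [exponentialPDF_of_nonneg hx, exponentialPDF_of_nonneg hx,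
      expMeasure_Ioi hr (by positivity),
      ← ENNReal.ofReal_mul (by positivity), ← ENNReal.ofReal_mul (by positivity)]
    congr 1
    have : exp (-(r * x)) * exp (-(r * (x + c))) = exp (-(r * c)) * exp (-(2 * r * x)) := by
      rw [← exp_add, ← exp_add]; ring_nf
    linear_combination r * this
  · rw [exponentialPDF_of_neg hx, exponentialPDF_of_neg hx, zero_mul, mul_zero]

theorem expMeasure_prod_add_lt (hr : 0 < r) {c : ℝ} (hc : 0 ≤ c) :
    (expMeasure r).prod (expMeasure r) {p | p.1 + c < p.2} =
      ENNReal.ofReal (exp (-(r * c)) / 2) := by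
  have := isProbabilityMeasure_expMeasure hr
  have htail : Measurable fun x => expMeasure r (Set.Ioi (x + c)) :=
    Antitone.measurable fun x y hxy => measure_mono (Set.Ioi_subset_Ioi (by linarith))
  calc (expMeasure r).prod (expMeasure r) {p | p.1 + c < p.2}
      = ∫⁻ x, expMeasure r (Set.Ioi (x + c)) ∂expMeasure r :=
        Measure.prod_apply (measurableSet_lt (by fun_prop) (by fun_prop))
    _ = ∫⁻ x, exponentialPDF r x * expMeasure r (Set.Ioi (x + c)) :=
        lintegral_withDensity_eq_lintegral_mul _ measurable_exponentialPDF htail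
    _ = ∫⁻ x, ENNReal.ofReal (exp (-(r * c)) / 2) * exponentialPDF (2 * r) x :=
        lintegral_congr (exponentialPDF_mul_expMeasure_Ioi hr hc)
    _ = ENNReal.ofReal (exp (-(r * c)) / 2) := by
        rw [lintegral_const_mul _ measurable_exponentialPDF,
          lintegral_exponentialPDF_eq_one (by positivity), mul_one]

theorem expMeasure_prod_abs_sub_le (hr : 0 < r) {c : ℝ} (hc : 0 ≤ c) :
    (expMeasure r).prod (expMeasure r) {p | |p.1 - p.2| ≤ c} =
      ENNReal.ofReal (1 - exp (-(r * c))) := by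
  have := isProbabilityMeasure_expMeasure hr
  have hlt : MeasurableSet {p : ℝ × ℝ | p.1 + c < p.2} :=
    measurableSet_lt (by fun_prop) (by fun_prop)
  have hcompl : {p : ℝ × ℝ | |p.1 - p.2| ≤ c}ᶜ =
      {p | p.1 + c < p.2} ∪ Prod.swap ⁻¹' {p | p.1 + c < p.2} := by
    ext p
    simp only [Set.mem_compl_iff, Set.mem_ofPred_eq, Set.mem_union, Set.mem_preimage,
      Prod.fst_swap, Prod.snd_swap, not_le, lt_abs]
    constructor <;> rintro (h | h) <;> first | (left; linarith) | (right; linarith)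
  have hdisj : Disjoint {p : ℝ × ℝ | p.1 + c < p.2} (Prod.swap ⁻¹' {p | p.1 + c < p.2}) :=
    Set.disjoint_left.2 fun p h₁ h₂ => by
      simp only [Set.mem_ofPred_eq, Set.mem_preimage, Prod.fst_swap, Prod.snd_swap] at h₁ h₂
      linarith
  have hswap := (Measure.measurePreserving_swap (μ := expMeasure r)
    (ν := expMeasure r)).measure_preimage hlt.nullMeasurableSet
  rw [← ofReal_measureReal, ← compl_compl {p : ℝ × ℝ | |p.1 - p.2| ≤ c},
    probReal_compl_eq_one_sub (measurableSet_le (by fun_prop) (by fun_prop)).compl, hcompl,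
    measureReal_def, measure_union hdisj (hlt.preimage measurable_swap), hswap,
    expMeasure_prod_add_lt hr hc, ← ENNReal.ofReal_add (by positivity) (by positivity), add_halves,
    ENNReal.toReal_ofReal (exp_pos _).le]

end ProbabilityTheory

theorem Real.exp_neg_mul_le_of_log_one_div_div_le {k Δ γ : ℝ} (hk : 0 < k) (hγ : 0 < γ)
    (h : log (1 / γ) / k ≤ Δ) : exp (-(k * Δ)) ≤ γ := by
  rw [div_le_iff₀ hk, one_div, log_inv] at h
  calc exp (-(k * Δ)) ≤ exp (log γ) := exp_le_exp.2 (by linarith)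
    _ = γ := exp_log hγ

/-- For `w ~ Exp(λ)^{⊗(n+1)}` and the induced neighbouring pair
`D = (w_1,…,w_n)`, `D' = (w_1,…,w_{n−1},w_{n+1})`, the sample means satisfy
`ℙ(|f(D) − f(D')| ≤ Δ) = 1 − e^{−λnΔ}` for every `Δ ≥ 0`; in particular this probability is
at least `1 − γ` whenever `Δ ≥ log(1/γ)/(λn)`. -/
theorem sampleMean_sensitivity_exponential
    (lam : ℝ) (hlam : 0 < lam) (n : ℕ) (hn : 1 ≤ n)
    (Δ : ℝ) (hΔ : 0 ≤ Δ)
    (A : Set (Fin (n + 1) → ℝ))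
    (hAdef : A = {w : Fin (n + 1) → ℝ |
      |(1 / (n : ℝ)) * (∑ i : Fin n, w i.castSucc) -
        (1 / (n : ℝ)) * (∑ i : Fin n,
          if (i : ℕ) = n - 1 then w (Fin.last n) else w i.castSucc)| ≤ Δ}) :
    (Measure.pi fun _ : Fin (n + 1) => expMeasure lam) A =
      ENNReal.ofReal (1 - Real.exp (-(lam * n * Δ))) ∧
    (∀ γ : ℝ, 0 < γ → γ < 1 → Real.log (1/γ) / (lam * n) ≤ Δ →
      1 - γ ≤ ((Measure.pi fun _ : Fin (n + 1) => expMeasure lam) A).toReal) := by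
  have := isProbabilityMeasure_expMeasure hlam
  obtain ⟨m, rfl⟩ : ∃ m, n = m + 1 := ⟨n - 1, by omega⟩
  have hn₀ : (0 : ℝ) < (m + 1 : ℕ) := by positivity
  have hA : A = (fun w => (w (Fin.last m).castSucc, w (Fin.last (m + 1)))) ⁻¹'
      {p | |p.1 - p.2| ≤ (m + 1 : ℕ) * Δ} := by
    have hlast (i : Fin (m + 1)) : (i : ℕ) = m + 1 - 1 ↔ i = Fin.last m := by
      simp [Fin.ext_iff]
    ext w
    simp only [hAdef, hlast, Set.mem_ofPred_eq, Set.mem_preimage, ← mul_sub,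
      Finset.sum_sub_sum_ite_eq, abs_mul, one_div, abs_inv, abs_of_pos hn₀,
      inv_mul_le_iff₀ hn₀]
  have hmeasure : (Measure.pi fun _ : Fin (m + 2) => expMeasure lam) A =
      ENNReal.ofReal (1 - exp (-(lam * (m + 1 : ℕ) * Δ))) := by
    rw [hA, ← Measure.map_apply (by fun_prop) (measurableSet_le (by fun_prop) (by fun_prop)),
      Measure.map_eval_prod_eval_pi _ (Fin.castSucc_lt_last _).ne,
      expMeasure_prod_abs_sub_le hlam (by positivity), mul_assoc]
  refine ⟨hmeasure, fun γ hγ _ hΔγ => ?_⟩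
  rw [hmeasure, ENNReal.toReal_ofReal']
  linarith [le_max_left (1 - exp (-(lam * (m + 1 : ℕ) * Δ))) 0,
    exp_neg_mul_le_of_log_one_div_div_le (by positivity) hγ hΔγ]
end
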